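/- Existence and uniqueness of the critical coefficient: There exists a unique β* ∈ (0,1) such that Φ(β*) = ε. -/

import Mathlib

/-!
Write `d = c • g + w` with `w ⟂ g`. Then `d(β) = (β (c + ξ) - ξ) • g + β • w`, so with
`a = (ξ - β (c + ξ)) ‖g‖` and `b = β ‖w‖` we get `-⟪g, d(β)⟫ = a ‖g‖` and `‖d(β)‖ = √(a² + b²)`.
For `b ≥ 0` and `0 ≤ ε < 1`, squaring shows that `a = ε √(a² + b²)` is equivalent to the linear
relation `a √(1 - ε²) = ε b`, and likewise with `<`. Hence `Φ(β) = ε` on `(0, 1)` exactly when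
`β K = L`, where `L = ξ ‖g‖ √(1 - ε²) > 0` and `K = L + (c ‖g‖ √(1 - ε²) + ε ‖w‖)`. The strict
version at `β = 1` turns the violated angle criterion into `L < K`, so `β* = L / K`.
-/

open scoped RealInnerProductSpace

noncomputable def dvec {n : ℕ} (g d : EuclideanSpace ℝ (Fin n)) (ξ β : ℝ) :
    EuclideanSpace ℝ (Fin n) :=
  β • d - ((1 - β) * ξ) • g

noncomputable def Phi {n : ℕ} (g d : EuclideanSpace ℝ (Fin n)) (ξ β : ℝ) : ℝ :=
  -⟪g, dvec g d ξ β⟫ / (‖g‖ * ‖dvec g d ξ β‖)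

section Scalar

variable {a b ε : ℝ}

theorem sqrt_one_sub_sq_pos (hε₀ : 0 ≤ ε) (hε₁ : ε < 1) : 0 < √(1 - ε ^ 2) :=
  Real.sqrt_pos.2 (by nlinarith)

theorem eq_mul_sqrt_sq_add_sq_iff (hb : 0 ≤ b) (hε₀ : 0 ≤ ε) (hε₁ : ε < 1) :
    a = ε * √(a ^ 2 + b ^ 2) ↔ a * √(1 - ε ^ 2) = ε * b := by
  have hS := sqrt_one_sub_sq_pos hε₀ hε₁
  rcases lt_or_ge a 0 with ha | ha
  · have : a * √(1 - ε ^ 2) < 0 := mul_neg_of_neg_of_pos ha hS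
    constructor <;> intro h <;> nlinarith [mul_nonneg hε₀ (Real.sqrt_nonneg (a ^ 2 + b ^ 2))]
  · calc a = ε * √(a ^ 2 + b ^ 2) ↔ a ^ 2 = (ε * √(a ^ 2 + b ^ 2)) ^ 2 :=
          (sq_eq_sq₀ ha (by positivity)).symm
      _ ↔ (a * √(1 - ε ^ 2)) ^ 2 = (ε * b) ^ 2 := by
          rw [mul_pow, mul_pow, Real.sq_sqrt (by positivity), Real.sq_sqrt (by nlinarith)]
          constructor <;> intro h <;> linarith
      _ ↔ a * √(1 - ε ^ 2) = ε * b := sq_eq_sq₀ (by positivity) (by positivity)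

theorem lt_mul_sqrt_sq_add_sq_iff (hb : 0 ≤ b) (hε₀ : 0 ≤ ε) (hε₁ : ε < 1) :
    a < ε * √(a ^ 2 + b ^ 2) ↔ a * √(1 - ε ^ 2) < ε * b := by
  have hS := sqrt_one_sub_sq_pos hε₀ hε₁
  rcases lt_or_ge a 0 with ha | ha
  · have : a * √(1 - ε ^ 2) < 0 := mul_neg_of_neg_of_pos ha hS
    constructor <;> intro h <;> nlinarith [mul_nonneg hε₀ (Real.sqrt_nonneg (a ^ 2 + b ^ 2))]
  · calc a < ε * √(a ^ 2 + b ^ 2) ↔ a ^ 2 < (ε * √(a ^ 2 + b ^ 2)) ^ 2 :=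
          (sq_lt_sq₀ ha (by positivity)).symm
      _ ↔ (a * √(1 - ε ^ 2)) ^ 2 < (ε * b) ^ 2 := by
          rw [mul_pow, mul_pow, Real.sq_sqrt (by positivity), Real.sq_sqrt (by nlinarith)]
          constructor <;> intro h <;> linarith
      _ ↔ a * √(1 - ε ^ 2) < ε * b := sq_lt_sq₀ (by positivity) (by positivity)

end Scalar

section InnerProductSpace

variable {E : Type*} [NormedAddCommGroup E] [InnerProductSpace ℝ E] {g w : E} {s t ε : ℝ}

theorem inner_sub_inner_div_norm_sq_smul_eq_zero (g d : E) :
    ⟪g, d - (⟪g, d⟫ / ‖g‖ ^ 2) • g⟫ = 0 := by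
  rcases eq_or_ne g 0 with rfl | hg
  · simp
  rw [inner_sub_right, real_inner_smul_right, real_inner_self_eq_norm_sq,
    div_mul_cancel₀ _ (by positivity), sub_self]

theorem norm_smul_add_smul_of_inner_eq_zero (hgw : ⟪g, w⟫ = 0) (t s : ℝ) :
    ‖t • g + s • w‖ = √((t * ‖g‖) ^ 2 + (s * ‖w‖) ^ 2) := by
  have h : ⟪t • g, s • w⟫ = 0 := by
    rw [real_inner_smul_left, real_inner_smul_right, hgw, mul_zero, mul_zero]
  rw [norm_add_eq_sqrt_iff_real_inner_eq_zero.2 h, norm_smul, norm_smul, Real.norm_eq_abs,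
    Real.norm_eq_abs, ← pow_two, ← pow_two, mul_pow, mul_pow, sq_abs, sq_abs, mul_pow, mul_pow]

theorem neg_inner_smul_add_smul_of_inner_eq_zero (hgw : ⟪g, w⟫ = 0) (t s : ℝ) :
    -⟪g, t • g + s • w⟫ = -t * ‖g‖ * ‖g‖ := by
  rw [inner_add_right, real_inner_smul_right, real_inner_smul_right, hgw,
    real_inner_self_eq_norm_sq]
  ring

theorem neg_inner_smul_add_smul_eq_iff (hg : g ≠ 0) (hgw : ⟪g, w⟫ = 0) (hs : 0 ≤ s)
    (hε₀ : 0 ≤ ε) (hε₁ : ε < 1) :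
    -⟪g, t • g + s • w⟫ = ε * ‖g‖ * ‖t • g + s • w‖ ↔
      -t * ‖g‖ * √(1 - ε ^ 2) = ε * (s * ‖w‖) := by
  rw [neg_inner_smul_add_smul_of_inner_eq_zero hgw, norm_smul_add_smul_of_inner_eq_zero hgw,
    mul_right_comm ε, mul_left_inj' (norm_ne_zero_iff.2 hg), ← neg_sq, ← neg_mul]
  exact eq_mul_sqrt_sq_add_sq_iff (by positivity) hε₀ hε₁

theorem neg_inner_smul_add_smul_lt_iff (hg : g ≠ 0) (hgw : ⟪g, w⟫ = 0) (hs : 0 ≤ s)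
    (hε₀ : 0 ≤ ε) (hε₁ : ε < 1) :
    -⟪g, t • g + s • w⟫ < ε * ‖g‖ * ‖t • g + s • w‖ ↔
      -t * ‖g‖ * √(1 - ε ^ 2) < ε * (s * ‖w‖) := by
  rw [neg_inner_smul_add_smul_of_inner_eq_zero hgw, norm_smul_add_smul_of_inner_eq_zero hgw,
    mul_right_comm ε, mul_lt_mul_iff_left₀ (norm_pos_iff.2 hg), ← neg_sq, ← neg_mul]
  exact lt_mul_sqrt_sq_add_sq_iff (by positivity) hε₀ hε₁

end InnerProductSpace

section SearchDirection

variable {n : ℕ} {g d : EuclideanSpace ℝ (Fin n)} {ξ β ε c : ℝ}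

theorem dvec_eq_smul_add_smul (g d : EuclideanSpace ℝ (Fin n)) (ξ β c : ℝ) :
    dvec g d ξ β = (β * (c + ξ) - ξ) • g + β • (d - c • g) := by
  rw [dvec]
  module

theorem dvec_ne_zero (hind : LinearIndependent ℝ ![g, d]) (hβ : β ≠ 0) : dvec g d ξ β ≠ 0 := by
  intro h
  refine hβ (LinearIndependent.pair_iff.1 hind (-((1 - β) * ξ)) β ?_).2
  rw [← h, dvec]
  module

theorem Phi_eq_iff (hg : g ≠ 0) (hv : dvec g d ξ β ≠ 0) :
    Phi g d ξ β = ε ↔ -⟪g, dvec g d ξ β⟫ = ε * ‖g‖ * ‖dvec g d ξ β‖ := by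
  rw [Phi, div_eq_iff (by positivity), mul_assoc]

theorem neg_inner_dvec_eq_iff (hg : g ≠ 0) (hc : ⟪g, d - c • g⟫ = 0) (hβ : 0 ≤ β)
    (hε₀ : 0 ≤ ε) (hε₁ : ε < 1) :
    -⟪g, dvec g d ξ β⟫ = ε * ‖g‖ * ‖dvec g d ξ β‖ ↔
      β * ((c + ξ) * ‖g‖ * √(1 - ε ^ 2) + ε * ‖d - c • g‖) = ξ * ‖g‖ * √(1 - ε ^ 2) := by
  rw [dvec_eq_smul_add_smul g d ξ β c, neg_inner_smul_add_smul_eq_iff hg hc hβ hε₀ hε₁]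
  constructor <;> intro h <;> linarith

theorem neg_inner_dvec_lt_iff (hg : g ≠ 0) (hc : ⟪g, d - c • g⟫ = 0) (hβ : 0 ≤ β)
    (hε₀ : 0 ≤ ε) (hε₁ : ε < 1) :
    -⟪g, dvec g d ξ β⟫ < ε * ‖g‖ * ‖dvec g d ξ β‖ ↔
      ξ * ‖g‖ * √(1 - ε ^ 2) < β * ((c + ξ) * ‖g‖ * √(1 - ε ^ 2) + ε * ‖d - c • g‖) := by
  rw [dvec_eq_smul_add_smul g d ξ β c, neg_inner_smul_add_smul_lt_iff hg hc hβ hε₀ hε₁]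
  constructor <;> intro h <;> linarith

end SearchDirection

/-- Existence and uniqueness of the critical coefficient:
there is a unique β* ∈ (0,1) with Φ(β*) = ε. -/
theorem critical_coefficient_exists_unique {n : ℕ} (g d : EuclideanSpace ℝ (Fin n))
    (hind : LinearIndependent ℝ ![g, d]) (ε ξ : ℝ)
    (hε : ε ∈ Set.Ioo (0 : ℝ) 1) (hξ : 0 < ξ)
    (hviol : -⟪g, d⟫ < ε * ‖g‖ * ‖d‖) :
    ∃! β : ℝ, β ∈ Set.Ioo (0 : ℝ) 1 ∧ Phi g d ξ β = ε := by
  obtain ⟨hε₀, hε₁⟩ := hε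
  have hg : g ≠ 0 := hind.ne_zero 0
  have hc := inner_sub_inner_div_norm_sq_smul_eq_zero g d
  set c := ⟪g, d⟫ / ‖g‖ ^ 2
  set S := √(1 - ε ^ 2)
  set K := (c + ξ) * ‖g‖ * S + ε * ‖d - c • g‖
  set L := ξ * ‖g‖ * S
  have hL : 0 < L := by have := sqrt_one_sub_sq_pos hε₀.le hε₁; positivity
  have hLK : L < K := by
    simpa using (neg_inner_dvec_lt_iff hg hc zero_le_one hε₀.le hε₁).1 (by simpa [dvec] using hviol)
  have hK : 0 < K := hL.trans hLK
  have hchar : ∀ β, 0 < β → (Phi g d ξ β = ε ↔ β * K = L) := fun β hβ =>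
    (Phi_eq_iff hg (dvec_ne_zero hind hβ.ne')).trans (neg_inner_dvec_eq_iff hg hc hβ.le hε₀.le hε₁)
  refine ⟨L / K, ⟨⟨div_pos hL hK, (div_lt_one hK).2 hLK⟩, ?_⟩, ?_⟩
  · exact (hchar _ (div_pos hL hK)).2 (div_mul_cancel₀ L hK.ne')
  · rintro β ⟨hβ, hΦ⟩
    exact eq_div_of_mul_eq hK.ne' ((hchar β hβ.1).1 hΦ)
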